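/- With Ψ(z) = Σ_{k≥0} E_k(0) z^k as a formal power series, the derivative satisfies the transformation Ψ'(x/(x+s)) = −((x+s)/s)²·Ψ(x/s) − ((x+s)/s)³·Ψ'(x/s), as formal power series in x with coefficients in ℚ(s). -/

import Mathlib

/-!
Write `ℰ` for the linear functional `xᵏ ↦ E_k(0)` on `ℚ[x]`. The explicit formula says
`ℰ p = ∑ᵢ (-1/2)ⁱ (Δⁱ p)(0)`, i.e. `ℰ = (1 + Δ/2)⁻¹` evaluated at `0`, so telescoping gives
`ℰ (p(x+1)) + ℰ p = 2 p(0)`. The `(N+1)`-st coefficient of `Ψ(u/(1+u))` is `ℰ (x (x-1)ᴺ)`,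
so `p = x (x-1)ᴺ` yields the functional equation `Ψ(u/(1+u)) = 2 - (1+u) Ψ(u)`.
Differentiating it by the chain rule, with `(u/(1+u))' = (1+u)⁻²`, gives the identity over `ℚ`;
the substitution `u = x/s` is a ring map `ℚ⟦u⟧ → ℚ(s)⟦x⟧` that commutes with composition.
-/

/-- `E_k(0)`, the value at `0` of the `k`-th Euler polynomial
(defined by `2/(1+eᵗ) = ∑_k E_k(0) tᵏ/k!`), via the explicit formula. -/
noncomputable def eulerZero (k : ℕ) : ℚ :=
  ∑ i ∈ Finset.range (k + 1), (2 : ℚ)⁻¹ ^ i *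
    ∑ j ∈ Finset.range (i + 1), (-1 : ℚ) ^ j * (i.choose j : ℚ) * (j : ℚ) ^ k

/-- Formal composition `F ∘ G` of power series (intended for `G` with zero constant
term, in which case `coeff N (G^k) = 0` for `k > N` and the truncation is exact). -/
noncomputable def composePS {K : Type*} [CommRing K] (F G : PowerSeries K) : PowerSeries K :=
  PowerSeries.mk fun N =>
    ∑ k ∈ Finset.range (N + 1), PowerSeries.coeff (R := K) k F * PowerSeries.coeff (R := K) N (G ^ k)

/-- The formal power series `Ψ(z) = ∑_{k≥0} E_k(0) zᵏ`, over the field `ℚ(s)` of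
rational functions (`s = RatFunc.X`). -/
noncomputable def PsiPS : PowerSeries (RatFunc ℚ) :=
  PowerSeries.mk fun k => RatFunc.C (eulerZero k)

/-- The series `Ψ(x/s) = ∑_k E_k(0) xᵏ/sᵏ`, a power series in `x` over `ℚ(s)`. -/
noncomputable def PsiXS : PowerSeries (RatFunc ℚ) :=
  PowerSeries.mk fun k => RatFunc.C (eulerZero k) * (RatFunc.X)⁻¹ ^ k

/-- The formal derivative `Ψ'(z) = ∑_{k≥0} (k+1) E_{k+1}(0) zᵏ`. -/
noncomputable def PsiPS' : PowerSeries (RatFunc ℚ) :=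
  PowerSeries.mk fun k => RatFunc.C ((k + 1 : ℚ) * eulerZero (k + 1))

/-- The series `Ψ'(x/s) = ∑_k (k+1) E_{k+1}(0) xᵏ/sᵏ`. -/
noncomputable def PsiXS' : PowerSeries (RatFunc ℚ) :=
  PowerSeries.mk fun k => RatFunc.C ((k + 1 : ℚ) * eulerZero (k + 1)) * (RatFunc.X)⁻¹ ^ k

/-- The formal expansion `x/(x+s) = ∑_{j≥1} (-1)^{j-1} xʲ/sʲ` as a power series in `x`. -/
noncomputable def xOverXPlusS : PowerSeries (RatFunc ℚ) :=
  PowerSeries.mk fun j => if j = 0 then 0 else (-1 : RatFunc ℚ) ^ (j - 1) * (RatFunc.X)⁻¹ ^ j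

open Finset

section EulerFunctional

open Polynomial fwdDiff

theorem sum_neg_one_pow_mul_choose_mul_eq_fwdDiff_iter {R : Type*} [CommRing R]
    (f : R → R) (i : ℕ) :
    ∑ j ∈ range (i + 1), (-1 : R) ^ j * (i.choose j : R) * f j
      = (-1) ^ i * (Δ_[1])^[i] f 0 := by
  rw [fwdDiff_iter_eq_sum_shift, mul_sum]
  refine sum_congr rfl fun j hj => ?_
  have hji : j ≤ i := Nat.lt_succ_iff.mp (mem_range.mp hj)
  have hsign : (-1 : R) ^ i * (-1) ^ (i - j) = (-1) ^ j := by
    rw [← pow_add, show i + (i - j) = j + 2 * (i - j) by omega, pow_add, pow_mul]; simp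
  simp only [zsmul_eq_mul, nsmul_eq_mul, mul_one, zero_add]
  push_cast
  rw [← hsign]; ring

theorem eulerZero_eq_sum_fwdDiff_iter {k M : ℕ} (hk : k < M) :
    eulerZero k
      = ∑ i ∈ range M, (-2⁻¹ : ℚ) ^ i * (Δ_[1])^[i] (fun r : ℚ => r ^ k) 0 := by
  have hterm : ∀ i, (2 : ℚ)⁻¹ ^ i *
      ∑ j ∈ range (i + 1), (-1 : ℚ) ^ j * (i.choose j : ℚ) * (j : ℚ) ^ k
        = (-2⁻¹ : ℚ) ^ i * (Δ_[1])^[i] (fun r : ℚ => r ^ k) 0 := fun i => by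
    rw [sum_neg_one_pow_mul_choose_mul_eq_fwdDiff_iter (fun r : ℚ => r ^ k),
      neg_pow' (2⁻¹ : ℚ)]
    ring
  simp only [eulerZero, hterm]
  refine sum_subset (range_subset_range.mpr hk) fun i _ hik => ?_
  rw [fwdDiff_iter_pow_eq_zero_of_lt (by simpa using hik), Pi.zero_apply, mul_zero]

noncomputable def eulerFunctional : ℚ[X] →ₗ[ℚ] ℚ :=
  Polynomial.lsum fun k => eulerZero k • LinearMap.id

theorem eulerFunctional_monomial (k : ℕ) (a : ℚ) :
    eulerFunctional (monomial k a) = a * eulerZero k := by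
  simp [eulerFunctional, mul_comm]

theorem eulerFunctional_X_pow (k : ℕ) : eulerFunctional (X ^ k) = eulerZero k := by
  rw [X_pow_eq_monomial, eulerFunctional_monomial, one_mul]

theorem eulerFunctional_eq_sum_fwdDiff_iter {p : ℚ[X]} {M : ℕ} (hp : p.natDegree < M) :
    eulerFunctional p = ∑ i ∈ range M, (-2⁻¹ : ℚ) ^ i * (Δ_[1])^[i] p.eval 0 := by
  have hp_eval : p.eval = ∑ n ∈ range M, p.coeff n • fun r : ℚ => r ^ n := by
    ext r; simp [eval_eq_sum_range' hp, smul_eq_mul]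
  conv_lhs => rw [p.as_sum_range' M hp]
  simp only [map_sum, eulerFunctional_monomial, hp_eval, fwdDiff_iter_finsetSum,
    fwdDiff_iter_const_smul, Finset.sum_apply, Pi.smul_apply, smul_eq_mul, mul_sum]
  rw [sum_comm]
  refine sum_congr rfl fun n hn => ?_
  rw [eulerZero_eq_sum_fwdDiff_iter (mem_range.mp hn), mul_sum]
  exact sum_congr rfl fun i _ => by ring

theorem eulerFunctional_taylor_one_add (p : ℚ[X]) :
    eulerFunctional (taylor 1 p) + eulerFunctional p = 2 * p.eval 0 := by
  set a : ℕ → ℚ := fun i => (Δ_[1])^[i] p.eval 0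
  have hshift : ∀ i, (Δ_[1])^[i] (taylor 1 p).eval 0 = a i + a (i + 1) := fun i => by
    have : (taylor 1 p).eval = fun r => p.eval (r + 1) := funext (taylor_eval 1 p)
    rw [this]
    refine (fwdDiff_iter_comp_add 1 p.eval 1 i 0).trans ?_
    simp [a, Function.iterate_succ_apply', fwdDiff]
  have hdeg : p.natDegree < p.natDegree + 1 := Nat.lt_succ_self _
  have hvanish : a (p.natDegree + 1) = 0 := by
    simp [a, Polynomial.fwdDiff_iter_eq_zero_of_degree_lt hdeg]
  have htelescope := sum_range_sub (fun i => -2 * (-2⁻¹ : ℚ) ^ i * a i) (p.natDegree + 1)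
  rw [eulerFunctional_eq_sum_fwdDiff_iter (M := p.natDegree + 1) (by rwa [natDegree_taylor]),
    eulerFunctional_eq_sum_fwdDiff_iter hdeg, ← sum_add_distrib]
  simp only [hshift, hvanish] at htelescope ⊢
  calc _ = ∑ i ∈ range (p.natDegree + 1),
          (-2 * (-2⁻¹ : ℚ) ^ (i + 1) * a (i + 1) - -2 * (-2⁻¹) ^ i * a i) :=
        sum_congr rfl fun i _ => by simp only [a]; ring
    _ = 2 * p.eval 0 := by rw [htelescope]; simp [a]

theorem eulerFunctional_X_mul_X_sub_one_pow (N : ℕ) :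
    eulerFunctional (X * (X - 1) ^ N)
      = ∑ k ∈ range (N + 1), (-1) ^ (N - k) * (N.choose k : ℚ) * eulerZero (k + 1) := by
  have hexpand : (X * (X - 1) ^ N : ℚ[X])
      = ∑ k ∈ range (N + 1), ((-1) ^ (N - k) * (N.choose k : ℚ)) • X ^ (k + 1) := by
    rw [sub_eq_add_neg, add_pow, mul_sum]
    refine sum_congr rfl fun k _ => ?_
    rw [smul_eq_C_mul]
    simp only [map_mul, map_pow, map_neg, map_one, map_natCast]
    ring
  simp only [hexpand, map_sum, map_smul, eulerFunctional_X_pow, smul_eq_mul]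

theorem sum_neg_one_pow_mul_choose_mul_eulerZero_succ (N : ℕ) :
    ∑ k ∈ range (N + 1), (-1) ^ (N - k) * (N.choose k : ℚ) * eulerZero (k + 1)
      = -(eulerZero (N + 1) + eulerZero N) := by
  have key := eulerFunctional_taylor_one_add (X * (X - 1) ^ N)
  simp only [taylor_mul, taylor_pow, taylor_X, map_sub, taylor_one, map_one, add_sub_cancel_right,
    eval_mul, eval_X, zero_mul, mul_zero, add_mul, one_mul, ← pow_succ', map_add,
    eulerFunctional_X_pow, eulerFunctional_X_mul_X_sub_one_pow] at key
  linear_combination key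

end EulerFunctional

open PowerSeries

section CommRing

variable {R : Type*} [CommRing R]

theorem coeff_pow_eq_zero_of_constantCoeff_eq_zero {G : R⟦X⟧} (hG : constantCoeff G = 0)
    {n k : ℕ} (hnk : n < k) : coeff n (G ^ k) = 0 :=
  X_pow_dvd_iff.mp (pow_dvd_pow_of_dvd (X_dvd_iff.mpr hG) k) n hnk

theorem composePS_eq_subst (F : R⟦X⟧) {G : R⟦X⟧} (hG : constantCoeff G = 0) :
    composePS F G = F.subst G := by
  ext n
  rw [composePS, coeff_mk, coeff_subst' (HasSubst.of_constantCoeff_zero' hG)]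
  refine (finsum_eq_sum_of_support_subset _ fun k hk => ?_).symm
  by_contra hkn
  exact hk (by
    simp only [coeff_pow_eq_zero_of_constantCoeff_eq_zero hG (by simpa using hkn), mul_zero])

theorem composePS_map_rescale {S : Type*} [CommRing S] (f : R →+* S) (a : S) (F G : R⟦X⟧) :
    composePS (map f F) (rescale a (map f G)) = rescale a (map f (composePS F G)) := by
  ext N
  simp only [composePS, coeff_mk, coeff_rescale, coeff_map, ← map_pow, map_sum, map_mul, mul_sum]
  exact sum_congr rfl fun k _ => by ring

variable (R) in
noncomputable def invOneAddX : R⟦X⟧ := rescale (-1) (mk 1)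

theorem one_add_X_mul_invOneAddX : (1 + X) * invOneAddX R = 1 := by
  have h := congrArg (rescale (-1 : R)) (mk_one_mul_one_sub_eq_one (S := R))
  rwa [map_mul, map_sub, map_one, rescale_X, map_neg, map_one, neg_one_mul, sub_neg_eq_add,
    mul_comm, ← invOneAddX] at h

theorem invOneAddX_pow_succ (d : ℕ) :
    invOneAddX R ^ (d + 1) = mk fun n => (-1) ^ n * (Nat.choose (d + n) d : R) := by
  ext n
  rw [invOneAddX, ← map_pow, mk_one_pow_eq_mk_choose_add, coeff_rescale, coeff_mk, coeff_mk]

variable (R) in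
noncomputable def xDivOneAddX : R⟦X⟧ := X * invOneAddX R

theorem constantCoeff_xDivOneAddX : constantCoeff (xDivOneAddX R) = 0 := by
  simp [xDivOneAddX]

theorem coeff_xDivOneAddX (j : ℕ) :
    coeff j (xDivOneAddX R) = if j = 0 then 0 else (-1) ^ (j - 1) := by
  cases j with
  | zero => simp [xDivOneAddX]
  | succ j => simp [xDivOneAddX, coeff_succ_X_mul, invOneAddX, coeff_rescale]

theorem coeff_succ_xDivOneAddX_pow_succ (N k : ℕ) :
    coeff (N + 1) (xDivOneAddX R ^ (k + 1)) = (-1) ^ (N - k) * (N.choose k : R) := by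
  rw [xDivOneAddX, mul_pow, invOneAddX_pow_succ, coeff_X_pow_mul']
  split_ifs with hkN
  · rw [coeff_mk, show k + (N + 1 - (k + 1)) = N by omega, show N + 1 - (k + 1) = N - k by omega]
  · rw [Nat.choose_eq_zero_of_lt (by omega), Nat.cast_zero, mul_zero]

theorem one_add_X_sq_mul_derivative_xDivOneAddX :
    (1 + X) ^ 2 * d⁄dX R (xDivOneAddX R) = 1 := by
  have hinv := one_add_X_mul_invOneAddX (R := R)
  have hderiv := congrArg (d⁄dX R) hinv
  rw [Derivation.leibniz, map_add, derivative_X, Derivation.map_one_eq_zero, zero_add,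
    smul_eq_mul, smul_eq_mul, mul_one] at hderiv
  have hG : xDivOneAddX R = 1 - invOneAddX R := by
    rw [xDivOneAddX]; linear_combination hinv
  rw [hG, map_sub, Derivation.map_one_eq_zero]
  linear_combination (-(1 + X : R⟦X⟧)) * hderiv + hinv

end CommRing

theorem eulerZero_zero : eulerZero 0 = 1 := by
  simp [eulerZero]

noncomputable def eulerSeries : ℚ⟦X⟧ := mk eulerZero

theorem composePS_eulerSeries_xDivOneAddX :
    composePS eulerSeries (xDivOneAddX ℚ) = C 2 - (1 + X) * eulerSeries := by
  ext n
  cases n with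
  | zero => norm_num [composePS, eulerSeries, eulerZero_zero]
  | succ N =>
    rw [composePS, coeff_mk, sum_range_succ']
    simp only [coeff_succ_xDivOneAddX_pow_succ, pow_zero, coeff_one, eulerSeries, coeff_mk,
      map_sub, coeff_C, add_mul, one_mul, map_add, coeff_succ_X_mul]
    rw [if_neg N.succ_ne_zero, if_neg N.succ_ne_zero, mul_zero, add_zero, zero_sub,
      ← sum_neg_one_pow_mul_choose_mul_eulerZero_succ]
    exact sum_congr rfl fun k _ => by ring

theorem composePS_derivative_eulerSeries_xDivOneAddX :
    composePS (d⁄dX ℚ eulerSeries) (xDivOneAddX ℚ)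
      = -(1 + X) ^ 2 * eulerSeries - (1 + X) ^ 3 * d⁄dX ℚ eulerSeries := by
  have hsubst := HasSubst.of_constantCoeff_zero' (constantCoeff_xDivOneAddX (R := ℚ))
  have hfun := congrArg (d⁄dX ℚ) composePS_eulerSeries_xDivOneAddX
  rw [composePS_eq_subst _ constantCoeff_xDivOneAddX, derivative_subst hsubst] at hfun
  rw [composePS_eq_subst _ constantCoeff_xDivOneAddX]
  simp only [map_sub, Derivation.leibniz, map_add, derivative_X, Derivation.map_one_eq_zero,
    smul_eq_mul, derivative_C] at hfun
  linear_combination (1 + X) ^ 2 * hfun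
    - subst (xDivOneAddX ℚ) (d⁄dX ℚ eulerSeries)
      * one_add_X_sq_mul_derivative_xDivOneAddX (R := ℚ)

theorem X_add_C_mul_C_inv {K : Type*} [Field K] {a : K} (ha : a ≠ 0) :
    (X + C a) * C a⁻¹ = rescale a⁻¹ (1 + X) := by
  rw [add_mul, ← map_mul, mul_inv_cancel₀ ha, map_one, map_add, map_one, rescale_X, add_comm,
    mul_comm]

theorem PsiPS'_eq_map_derivative : PsiPS' = map RatFunc.C (d⁄dX ℚ eulerSeries) := by
  ext k
  simp [PsiPS', eulerSeries, coeff_derivative, mul_comm]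

theorem PsiXS_eq_rescale_map : PsiXS = rescale (RatFunc.X)⁻¹ (map RatFunc.C eulerSeries) := by
  ext k
  simp [PsiXS, eulerSeries, coeff_rescale, mul_comm]

theorem PsiXS'_eq_rescale_map :
    PsiXS' = rescale (RatFunc.X)⁻¹ (map RatFunc.C (d⁄dX ℚ eulerSeries)) := by
  ext k
  simp [PsiXS', eulerSeries, coeff_rescale, coeff_derivative, mul_comm]

theorem xOverXPlusS_eq_rescale_map :
    xOverXPlusS = rescale (RatFunc.X)⁻¹ (map RatFunc.C (xDivOneAddX ℚ)) := by
  ext j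
  simp only [xOverXPlusS, coeff_mk, coeff_rescale, coeff_map, coeff_xDivOneAddX]
  split_ifs <;> simp [mul_comm]

/-- `Ψ'(x/(x+s)) = −((x+s)/s)²·Ψ(x/s) − ((x+s)/s)³·Ψ'(x/s)` as formal power series
in `x` over `ℚ(s)`. -/
theorem psi_deriv_transformation :
    composePS PsiPS' xOverXPlusS
      = - ((PowerSeries.X + PowerSeries.C (R := RatFunc ℚ) RatFunc.X)
            * PowerSeries.C (R := RatFunc ℚ) (RatFunc.X)⁻¹) ^ 2 * PsiXS
        - ((PowerSeries.X + PowerSeries.C (R := RatFunc ℚ) RatFunc.X)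
            * PowerSeries.C (R := RatFunc ℚ) (RatFunc.X)⁻¹) ^ 3 * PsiXS' := by
  have hscale : (X + C RatFunc.X) * C (RatFunc.X : RatFunc ℚ)⁻¹
      = rescale (RatFunc.X)⁻¹ (map RatFunc.C (1 + X)) := by
    rw [X_add_C_mul_C_inv RatFunc.X_ne_zero, map_add (PowerSeries.map (RatFunc.C (K := ℚ))),
      map_one, map_X]
  rw [hscale, PsiXS_eq_rescale_map, PsiXS'_eq_rescale_map, PsiPS'_eq_map_derivative,
    xOverXPlusS_eq_rescale_map, composePS_map_rescale,
    composePS_derivative_eulerSeries_xDivOneAddX]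
  simp only [map_sub, map_neg, map_mul, map_pow]
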